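/- arXiv:1107.3174 — 3 statements merged into one kernel-verified Lean document; each statement's English description precedes it below -/
import Mathlib

section
/- Let A be an n×n complex Hurwitz matrix (every eigenvalue of A has negative real part), let Q be an n×n complex positive semidefinite matrix, and let P be an n×n Hermitian matrix satisfying the Lyapunov equation A·P + P·Aᴴ + Q = 0 (where Aᴴ denotes the conjugate transpose). Then P is positive semidefinite. -/
/-!
The Cayley transform `C = (A - 1)⁻¹ (A + 1)` turns the Lyapunov equation `A P + P Aᴴ + Q = 0`
into the Stein equation `P = C P Cᴴ + 2 (A - 1)⁻¹ Q (A - 1)⁻ᴴ`, and maps the open left half-plane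
into the open unit disc, so by Gelfand's formula `Cᵏ → 0`. The Stein equation makes the quadratic
form of `P` non-increasing along the orbit `y ↦ Cᴴ y`, which tends to `0`; hence it is nonnegative.
-/

open Matrix
open scoped ComplexOrder

/-- A complex square matrix is Hurwitz if every eigenvalue (i.e. every element of its
spectrum) has strictly negative real part. -/
def Matrix.IsHurwitz {n : Type*} [Fintype n] [DecidableEq n] (A : Matrix n n ℂ) : Prop :=
  ∀ μ ∈ spectrum ℂ A, μ.re < 0

open Filter Topology

theorem tendsto_pow_atTop_nhds_zero_of_forall_spectrum_norm_lt_one {A : Type*} [NormedRing A]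
    [NormedAlgebra ℂ A] [CompleteSpace A] {a : A} (ha : ∀ z ∈ spectrum ℂ a, ‖z‖ < 1) :
    Tendsto (fun k : ℕ => a ^ k) atTop (𝓝 0) := by
  cases subsingleton_or_nontrivial A
  · simpa only [Subsingleton.elim _ (0 : A)] using tendsto_const_nhds
  have hρ : spectralRadius ℂ a < 1 :=
    ENNReal.coe_one ▸ spectrum.spectralRadius_lt_of_forall_lt a fun z hz => mod_cast ha z hz
  obtain ⟨r, hρr, hr1⟩ := exists_between hρ
  have hr : r ≠ ⊤ := (hr1.trans ENNReal.one_lt_top).ne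
  have hev : ∀ᶠ k : ℕ in atTop, ‖a ^ k‖ ≤ r.toReal ^ k := by
    filter_upwards [(spectrum.pow_norm_pow_one_div_tendsto_nhds_spectralRadius a).eventually
      (gt_mem_nhds hρr), eventually_ne_atTop 0] with k hk hk0
    rw [ENNReal.ofReal_lt_iff_lt_toReal (by positivity) hr] at hk
    calc ‖a ^ k‖ = (‖a ^ k‖ ^ (1 / k : ℝ)) ^ k := by
          rw [one_div, Real.rpow_inv_natCast_pow (norm_nonneg _) hk0]
      _ ≤ r.toReal ^ k := by gcongr
  refine squeeze_zero_norm' hev (tendsto_pow_atTop_nhds_zero_of_lt_one ENNReal.toReal_nonneg ?_)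
  exact ENNReal.toReal_lt_of_lt_ofReal (by simpa using hr1)

theorem Matrix.tendsto_pow_atTop_nhds_zero_of_forall_spectrum_norm_lt_one {n : Type*} [Fintype n]
    [DecidableEq n] {C : Matrix n n ℂ} (hC : ∀ z ∈ spectrum ℂ C, ‖z‖ < 1) :
    Tendsto (fun k : ℕ => C ^ k) atTop (𝓝 0) :=
  -- any submultiplicative matrix norm will do; this one induces the entrywise topology
  letI := Matrix.linftyOpNormedRing (n := n) (α := ℂ)
  letI := Matrix.linftyOpNormedAlgebra (R := ℂ) (n := n) (α := ℂ)
  _root_.tendsto_pow_atTop_nhds_zero_of_forall_spectrum_norm_lt_one hC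

theorem Complex.re_add_one_div_sub_one_nonneg {μ : ℂ} (hμ : 1 ≤ ‖μ‖) :
    0 ≤ ((μ + 1) / (μ - 1)).re := by
  have h : 1 ≤ μ.re * μ.re + μ.im * μ.im := by
    rw [← Complex.normSq_apply, ← Complex.sq_norm]; nlinarith
  rw [Complex.div_re, ← add_div]
  apply div_nonneg _ (Complex.normSq_nonneg _)
  simp only [Complex.add_re, Complex.sub_re, Complex.one_re, Complex.add_im, Complex.sub_im,
    Complex.one_im]
  nlinarith

theorem spectrum_cayley_norm_lt_one {R : Type*} [Ring R] [Algebra ℂ R] {a : R}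
    (ha : ∀ ν ∈ spectrum ℂ a, ν.re < 0) (u : Rˣ) (hu : (u : R) = a - 1) :
    ∀ μ ∈ spectrum ℂ (↑u⁻¹ * (a + 1)), ‖μ‖ < 1 := by
  intro μ hμ
  by_contra! hμ1
  refine hμ (?_ : IsUnit _)
  have hfactor : algebraMap ℂ R μ - ↑u⁻¹ * (a + 1) = ↑u⁻¹ * (μ • (a - 1) - (a + 1)) := by
    rw [mul_sub, mul_smul_comm, ← hu, Units.inv_mul, Algebra.algebraMap_eq_smul_one]
  rw [hfactor]
  refine u⁻¹.isUnit.mul ?_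
  rcases eq_or_ne μ 1 with rfl | hμ_ne
  · have : (1 : ℂ) • (a - 1) - (a + 1) = algebraMap ℂ R (-(1 + 1)) := by
      rw [one_smul, map_neg, map_add, map_one]; abel
    rw [this]
    exact (IsUnit.mk0 _ (by norm_num)).map _
  · have hscalar : (1 - μ) * ((μ + 1) / (μ - 1)) = -(μ + 1) := by
      rw [mul_div_assoc', div_eq_iff (sub_ne_zero.mpr hμ_ne)]; ring
    -- the Cayley map sends `(μ + 1) / (μ - 1)` to `μ`
    have hν : (μ + 1) / (μ - 1) ∉ spectrum ℂ a := fun h =>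
      (ha _ h).not_ge (Complex.re_add_one_div_sub_one_nonneg hμ1)
    have : μ • (a - 1) - (a + 1)
        = algebraMap ℂ R (1 - μ) * (algebraMap ℂ R ((μ + 1) / (μ - 1)) - a) := by
      rw [Algebra.algebraMap_eq_smul_one, Algebra.algebraMap_eq_smul_one, smul_one_mul,
        smul_sub (1 - μ) _ a, smul_smul, hscalar]
      simp only [smul_sub, sub_smul, add_smul, neg_smul, one_smul]
      abel
    rw [this]
    exact ((IsUnit.mk0 _ (sub_ne_zero.mpr hμ_ne.symm)).map _).mul (spectrum.notMem_iff.mp hν)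

theorem eq_cayley_mul_mul_star_add {R : Type*} [Ring R] [StarRing R] {a p q : R} (u : Rˣ)
    (hu : (u : R) = a - 1) (hLyap : a * p + p * star a + q = 0) :
    p = (↑u⁻¹ * (a + 1)) * p * star (↑u⁻¹ * (a + 1)) + ↑u⁻¹ * (2 • q) * star (↑u⁻¹ : R) := by
  have key : (a - 1) * p * star (a - 1) = (a + 1) * p * star (a + 1) + 2 • q := by
    rw [eq_neg_of_add_eq_zero_right hLyap, star_sub, star_add, star_one]
    noncomm_ring
  calc p = ↑u⁻¹ * ((a - 1) * p * star (a - 1)) * star (↑u⁻¹ : R) := by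
        rw [← hu, ← mul_assoc, ← mul_assoc, Units.inv_mul, one_mul, mul_assoc, ← star_mul,
          Units.inv_mul, star_one, mul_one]
    _ = _ := by rw [key, star_mul]; noncomm_ring

theorem Matrix.IsHermitian.posSemidef_of_stein {n 𝕜 : Type*} [Fintype n] [DecidableEq n]
    [RCLike 𝕜] {P C R : Matrix n n 𝕜} (hP : P.IsHermitian) (hR : R.PosSemidef)
    (hStein : P = C * P * Cᴴ + R) (hC : Tendsto (fun k : ℕ => C ^ k) atTop (𝓝 0)) :
    P.PosSemidef := by
  refine PosSemidef.of_dotProduct_mulVec_nonneg hP fun x => ?_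
  set q : (n → 𝕜) → 𝕜 := fun y => star y ⬝ᵥ (P *ᵥ y) with hq
  have hq_cont : Continuous q := by fun_prop
  have hstep : ∀ y, q (Cᴴ *ᵥ y) ≤ q y := by
    intro y
    have hconj : star y ⬝ᵥ ((C * P * Cᴴ) *ᵥ y) = q (Cᴴ *ᵥ y) := by
      simp only [hq]
      rw [star_mulVec, conjTranspose_conjTranspose, ← mulVec_mulVec, ← mulVec_mulVec,
        dotProduct_mulVec]
    calc q (Cᴴ *ᵥ y) ≤ q (Cᴴ *ᵥ y) + star y ⬝ᵥ (R *ᵥ y) :=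
          le_add_of_nonneg_right (hR.dotProduct_mulVec_nonneg y)
      _ = q y := by rw [← hconj, ← dotProduct_add, ← add_mulVec, ← hStein]
  have horbit : ∀ k, q ((C ^ k)ᴴ *ᵥ x) ≤ q x := by
    intro k
    induction k with
    | zero => simp
    | succ k ih => rw [pow_succ, conjTranspose_mul, ← mulVec_mulVec]; exact (hstep _).trans ih
  have hlim : Tendsto (fun k => q ((C ^ k)ᴴ *ᵥ x)) atTop (𝓝 0) := by
    have hcont : Continuous fun M : Matrix n n 𝕜 => q (Mᴴ *ᵥ x) :=
      hq_cont.comp (continuous_id.matrix_conjTranspose.matrix_mulVec continuous_const)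
    have hq0 : q 0 = 0 := by simp [hq]
    simpa [Function.comp_def, hq0] using (hcont.tendsto 0).comp hC
  exact le_of_tendsto' hlim horbit

/-- **Lyapunov stability theorem (positivity part).**
If `A` is Hurwitz, `Q` is positive semidefinite and the Hermitian matrix `P` satisfies the
Lyapunov equation `A * P + P * Aᴴ + Q = 0`, then `P` is positive semidefinite. -/
theorem lyapunov_solution_posSemidef {n : ℕ} (A Q P : Matrix (Fin n) (Fin n) ℂ)
    (hA : A.IsHurwitz) (hQ : Q.PosSemidef) (hP : P.IsHermitian)
    (hLyap : A * P + P * Aᴴ + Q = 0) :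
    P.PosSemidef := by
  obtain ⟨u, hu⟩ : IsUnit (A - 1) := by
    have h1 : (1 : ℂ) ∉ spectrum ℂ A := fun h => (hA 1 h).not_ge zero_le_one
    have := (spectrum.notMem_iff.mp h1).neg
    rwa [map_one, neg_sub] at this
  have hStein := eq_cayley_mul_mul_star_add u hu hLyap
  rw [star_eq_conjTranspose, star_eq_conjTranspose] at hStein
  refine hP.posSemidef_of_stein ?_ hStein
    (Matrix.tendsto_pow_atTop_nhds_zero_of_forall_spectrum_norm_lt_one
      (spectrum_cayley_norm_lt_one hA u hu))
  exact (two_nsmul Q ▸ hQ.add hQ).mul_mul_conjTranspose_same _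
end

section
/- Let A be an n×n complex Hurwitz matrix and Q an n×n complex matrix. Then the improper integral P = ∫₀^∞ exp(tA)·Q·exp(tAᴴ) dt converges, and P satisfies the Lyapunov equation A·P + P·Aᴴ + Q = 0; moreover, if Q is positive semidefinite then P is positive semidefinite. -/
open Matrix MeasureTheory NormedSpace
open scoped ComplexOrder

attribute [local instance] Matrix.normedAddCommGroup Matrix.normedSpace

/-!
Split `1 = ∑ μ, y μ` along the generalized eigenspaces of left multiplication by `A`. On the
`μ`-component the exponential series terminates:
`exp (t • A) * y μ = e^{tμ} ∑_{j<k} t^j / j! • (A - μ)^j * y μ`, so `Re μ < c` on the spectrum gives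
`exp (t • A) = O(e^{ct})`, and for Hurwitz `A` some `c < 0` works. Hence
`F t = exp (t • A) * Q * exp (t • Aᴴ)` decays exponentially; since `F' = A F + F Aᴴ` and `F → 0`,
integrating over `(0, ∞)` gives `A P + P Aᴴ = -F 0 = -Q`. Each `F t` is a congruence of `Q` and the
positive semidefinite cone is closed, so `P` is positive semidefinite when `Q` is.
-/

open Filter Asymptotics Topology Finset
open scoped Nat

theorem exists_sum_eq_one_of_pow_sub_algebraMap_mul_eq_zero {K 𝔸 : Type*} [Field K]
    [IsAlgClosed K] [Ring 𝔸] [Algebra K 𝔸] [FiniteDimensional K 𝔸] (a : 𝔸) :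
    ∃ y : K →₀ 𝔸, ∑ μ ∈ y.support, y μ = 1 ∧
      ∀ μ ∈ y.support, μ ∈ spectrum K a ∧ ∃ k : ℕ, (a - algebraMap K 𝔸 μ) ^ k * y μ = 0 := by
  set T := Algebra.lmul K 𝔸 a
  have hT (μ : K) (k : ℕ) (x : 𝔸) :
      ((T - μ • 1) ^ k) x = (a - algebraMap K 𝔸 μ) ^ k * x := by
    rw [← Algebra.algebraMap_eq_smul_one, ← (Algebra.lmul K 𝔸).commutes, ← map_sub, ← map_pow,
      Algebra.coe_lmul_eq_mul, LinearMap.mul_apply']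
  have h1 : (1 : 𝔸) ∈ ⨆ μ, T.maxGenEigenspace μ := by
    rw [Module.End.iSup_maxGenEigenspace_eq_top]; trivial
  obtain ⟨y, hy, hsum⟩ := (Submodule.mem_iSup_iff_exists_finsupp _ _).1 h1
  refine ⟨y, hsum, fun μ hμ => ?_⟩
  obtain ⟨k, hk⟩ := (Module.End.mem_maxGenEigenspace _ _ _).1 (hy μ)
  rw [hT] at hk
  refine ⟨fun hunit => Finsupp.mem_support_iff.1 hμ ?_, k, hk⟩
  have : IsUnit ((a - algebraMap K 𝔸 μ) ^ k) := by
    rw [← neg_sub]; exact hunit.neg.pow k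
  exact this.mul_right_eq_zero.1 hk

theorem exp_mul_eq_sum_of_pow_mul_eq_zero (𝕂 : Type*) {𝔸 : Type*} [RCLike 𝕂] [NormedRing 𝔸]
    [NormedAlgebra 𝕂 𝔸] [CompleteSpace 𝔸] {x y : 𝔸} {k : ℕ} (h : x ^ k * y = 0) :
    exp x * y = ∑ j ∈ range k, (j !⁻¹ : 𝕂) • (x ^ j * y) := by
  rw [exp_eq_tsum 𝕂, ← (expSeries_summable' x).tsum_mul_right]
  refine (tsum_eq_sum fun j hj => ?_).trans (sum_congr rfl fun j _ => smul_mul_assoc _ _ _)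
  rw [smul_mul_assoc, ← Nat.sub_add_cancel (not_lt.1 (mem_range.not.1 hj)), pow_add, mul_assoc, h,
    mul_zero, smul_zero]

theorem isBigO_pow_mul_cexp {μ : ℂ} {c : ℝ} (hμ : μ.re < c) (j : ℕ) :
    (fun t : ℝ => (t : ℂ) ^ j * Complex.exp (t * μ)) =O[atTop] fun t => Real.exp (c * t) := by
  have hpow : (fun t : ℝ => (t : ℂ) ^ j) =O[atTop] fun t => Real.exp ((c - μ.re) * t) := by
    refine .of_norm_left ((isLittleO_pow_exp_pos_mul_atTop j (sub_pos.2 hμ)).isBigO.congr' ?_ .rfl)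
    filter_upwards [eventually_ge_atTop 0] with t ht
    simp [abs_of_nonneg ht]
  have hexp : (fun t : ℝ => Complex.exp (t * μ)) =O[atTop] fun t => Real.exp (μ.re * t) :=
    isBigO_of_le _ fun t => by simp [Complex.norm_exp, mul_comm]
  refine (hpow.mul hexp).congr_right fun t => ?_
  rw [← Real.exp_add, sub_mul, sub_add_cancel]

theorem integrableOn_Ioi_of_isBigO_exp {E : Type*} [NormedAddCommGroup E] {f : ℝ → E} {c : ℝ}
    (hf : Continuous f) (hc : c < 0) (ho : f =O[atTop] fun t => Real.exp (c * t)) (a : ℝ) :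
    IntegrableOn f (Set.Ioi a) :=
  ((hf.locallyIntegrable.locallyIntegrableOn _).integrableOn_of_isBigO_atTop ho
    ⟨_, Ioi_mem_atTop 0, integrableOn_exp_mul_Ioi hc 0⟩).mono_set Set.Ioi_subset_Ici_self

theorem ContinuousLinearMap.map_integral_Ioi_of_hasDerivAt {E : Type*} [NormedAddCommGroup E]
    [NormedSpace ℝ E] [CompleteSpace E] (L : E →L[ℝ] E) {f : ℝ → E} {a : ℝ}
    (hderiv : ∀ t ∈ Set.Ici a, HasDerivAt f (L (f t)) t) (hf : IntegrableOn f (Set.Ioi a))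
    (hlim : Tendsto f atTop (𝓝 0)) :
    L (∫ t in Set.Ioi a, f t) = -f a := by
  rw [← L.integral_comp_comm hf,
    integral_Ioi_of_hasDerivAt_of_tendsto' hderiv (L.integrable_comp hf) hlim, zero_sub]

section BanachAlgebra

variable {𝔸 : Type*} [NormedRing 𝔸]

theorem hasDerivAt_exp_smul_mul_mul_exp_smul [NormedAlgebra ℝ 𝔸] [CompleteSpace 𝔸]
    (a q b : 𝔸) (t : ℝ) :
    HasDerivAt (fun s : ℝ => exp (s • a) * q * exp (s • b))
      (a * (exp (t • a) * q * exp (t • b)) + exp (t • a) * q * exp (t • b) * b) t := by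
  refine (((hasDerivAt_exp_smul_const' a t).mul_const q).mul
    (hasDerivAt_exp_smul_const b t)).congr_deriv ?_
  simp only [mul_assoc]

variable [NormedAlgebra ℂ 𝔸]

theorem exp_smul_mul_eq_sum [CompleteSpace 𝔸] {a y : 𝔸} {μ : ℂ} {k : ℕ}
    (h : (a - algebraMap ℂ 𝔸 μ) ^ k * y = 0) (t : ℂ) :
    exp (t • a) * y = ∑ j ∈ range k,
      ((j !⁻¹ : ℂ) * (t ^ j * Complex.exp (t * μ))) • ((a - algebraMap ℂ 𝔸 μ) ^ j * y) := by
  let _ : NormedAlgebra ℚ 𝔸 := .restrictScalars ℚ ℂ 𝔸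
  set N := a - algebraMap ℂ 𝔸 μ
  have hsplit : t • a = algebraMap ℂ 𝔸 (t * μ) + t • N := by
    rw [smul_sub, map_mul, Algebra.smul_def t (algebraMap ℂ 𝔸 μ)]; abel
  have hk : (t • N) ^ k * y = 0 := by rw [smul_pow, smul_mul_assoc, h, smul_zero]
  rw [hsplit, NormedSpace.exp_add_of_commute (Algebra.commutes _ _), ← algebraMap_exp_comm,
    ← Complex.exp_eq_exp_ℂ, mul_assoc, exp_mul_eq_sum_of_pow_mul_eq_zero ℂ hk, ← Algebra.smul_def,
    smul_sum]
  refine sum_congr rfl fun j _ => ?_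
  rw [smul_pow, smul_mul_assoc, smul_smul, smul_smul]
  ring_nf

theorem isBigO_exp_smul_mul [CompleteSpace 𝔸] {a y : 𝔸} {μ : ℂ} {k : ℕ}
    (h : (a - algebraMap ℂ 𝔸 μ) ^ k * y = 0) {c : ℝ} (hμ : μ.re < c) :
    (fun t : ℝ => exp ((t : ℂ) • a) * y) =O[atTop] fun t => Real.exp (c * t) := by
  simp_rw [exp_smul_mul_eq_sum h]
  refine IsBigO.fun_sum fun j _ => ?_
  exact ((ContinuousLinearMap.toSpanSingleton ℂ ((a - algebraMap ℂ 𝔸 μ) ^ j * y)).isBigO_comp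
    _ _).trans ((isBigO_pow_mul_cexp hμ j).const_mul_left _)

theorem isBigO_exp_smul_of_forall_re_lt [FiniteDimensional ℂ 𝔸] {a : 𝔸} {c : ℝ}
    (hc : ∀ μ ∈ spectrum ℂ a, μ.re < c) :
    (fun t : ℝ => exp ((t : ℂ) • a)) =O[atTop] fun t => Real.exp (c * t) := by
  have := FiniteDimensional.complete ℂ 𝔸
  obtain ⟨y, hsum, hy⟩ := exists_sum_eq_one_of_pow_sub_algebraMap_mul_eq_zero (K := ℂ) a
  have hexp (t : ℝ) : exp ((t : ℂ) • a) = ∑ μ ∈ y.support, exp ((t : ℂ) • a) * y μ := by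
    rw [← mul_sum, hsum, mul_one]
  refine (IsBigO.fun_sum fun μ hμ => ?_).congr_left fun t => (hexp t).symm
  obtain ⟨hspec, k, hk⟩ := hy μ hμ
  exact isBigO_exp_smul_mul hk (hc μ hspec)

end BanachAlgebra

namespace Matrix

section PosSemidef

open scoped MatrixOrder

variable {n 𝕜 : Type*} [Fintype n] [RCLike 𝕜]

theorem isClosed_setOf_posSemidef : IsClosed {M : Matrix n n 𝕜 | M.PosSemidef} := by
  simp only [posSemidef_iff_dotProduct_mulVec, Set.ofPred_and, Set.ofPred_forall]
  exact (isClosed_eq continuous_id.matrix_conjTranspose continuous_id).inter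
    (isClosed_iInter fun x => isClosed_le continuous_const (by fun_prop))

theorem PosSemidef.integral {α : Type*} [MeasurableSpace α] {μ : Measure α}
    {f : α → Matrix n n 𝕜} (hf : ∀ x, (f x).PosSemidef) : (∫ x, f x ∂μ).PosSemidef := by
  have hIci (a : Matrix n n 𝕜) : IsClosed (Set.Ici a) :=
    isClosed_setOf_posSemidef.preimage (continuous_id.sub continuous_const)
  -- The `ClosedIciTopology` instance is given by hand: instance search does not identify the
  -- scoped matrix order and the sup-norm topology with the ones `integral_nonneg` is stated for.
  exact nonneg_iff_posSemidef.1
    (@integral_nonneg _ _ _ _ _ _ _ _ _ ⟨hIci⟩ _ fun x => (hf x).nonneg)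

end PosSemidef

variable {m : Type*} [Fintype m] [DecidableEq m]

theorem exp_smul_conjTranspose {𝕜 : Type*} [RCLike 𝕜] (A : Matrix m m 𝕜) (t : ℝ) :
    exp (t • Aᴴ) = (exp (t • A))ᴴ := by
  rw [← exp_conjTranspose, conjTranspose_smul, star_trivial]

theorem hasDerivAt_exp_smul_mul_mul_exp_smul {𝕜 : Type*} [RCLike 𝕜] (A Q B : Matrix m m 𝕜)
    (t : ℝ) :
    HasDerivAt (fun s : ℝ => exp (s • A) * Q * exp (s • B))
      (A * (exp (t • A) * Q * exp (t • B)) + exp (t • A) * Q * exp (t • B) * B) t := by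
  -- The sup norm on matrices is not submultiplicative, so the calculus is done in the operator
  -- norm and read off entry by entry.
  refine hasDerivAt_pi.2 fun i => hasDerivAt_pi.2 fun j => ?_
  open scoped Norms.Operator in
  exact (LinearMap.toContinuousLinearMap (entryLinearMap ℝ 𝕜 i j)).hasFDerivAt.comp_hasDerivAt t
    (_root_.hasDerivAt_exp_smul_mul_mul_exp_smul A Q B t)

theorem IsHurwitz.exists_neg_forall_re_lt {A : Matrix m m ℂ} (hA : A.IsHurwitz) :
    ∃ c < 0, ∀ μ ∈ spectrum ℂ A, μ.re < c := by
  have h : ∀ᶠ c in 𝓝[<] (0 : ℝ), ∀ μ ∈ spectrum ℂ A, μ.re < c :=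
    (A.finite_spectrum.eventually_all).2 fun μ hμ =>
      nhdsWithin_le_nhds (eventually_gt_nhds (hA μ hμ))
  exact (h.and self_mem_nhdsWithin).exists.imp fun c hc => ⟨hc.2, hc.1⟩

theorem IsHurwitz.exists_isBigO_exp_smul_mul_mul_exp_smul {A : Matrix m m ℂ} (hA : A.IsHurwitz)
    (Q : Matrix m m ℂ) : ∃ c < 0,
      (fun t : ℝ => exp (t • A) * Q * exp (t • Aᴴ)) =O[atTop] fun t => Real.exp (c * t) := by
  obtain ⟨c, hc, hre⟩ := hA.exists_neg_forall_re_lt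
  have hreH : ∀ μ ∈ spectrum ℂ Aᴴ, μ.re < c := fun μ hμ => by
    rw [← star_eq_conjTranspose, spectrum.map_star] at hμ
    have := hre _ (Set.mem_star.1 hμ)
    rwa [Complex.star_def, Complex.conj_re] at this
  refine ⟨c + c, by linarith, isBigO_pi.2 fun i => isBigO_pi.2 fun j => ?_⟩
  simp_rw [RCLike.real_smul_eq_coe_smul (K := ℂ)]
  open scoped Norms.Operator in
  exact ((LinearMap.toContinuousLinearMap (entryLinearMap ℂ ℂ i j)).isBigO_comp _ _).trans
    ((((isBigO_exp_smul_of_forall_re_lt hre).mul (isBigO_const_const Q one_ne_zero _)).mul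
      (isBigO_exp_smul_of_forall_re_lt hreH)).congr_right fun t => by
        rw [mul_one, ← Real.exp_add, add_mul])

end Matrix

/-- **Integral solution of the Lyapunov equation.**
If `A` is Hurwitz then the improper integral `P = ∫₀^∞ exp(tA) Q exp(tAᴴ) dt` converges,
`P` satisfies the Lyapunov equation `A P + P Aᴴ + Q = 0`, and if `Q` is positive semidefinite
then so is `P`. -/
theorem lyapunov_integral_solution {n : ℕ} (A Q : Matrix (Fin n) (Fin n) ℂ)
    (hA : A.IsHurwitz) :
    @IntegrableOn ℝ (Matrix (Fin n) (Fin n) ℂ) _ _ SeminormedAddGroup.toContinuousENorm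
      (fun t : ℝ => exp (t • A) * Q * exp (t • Aᴴ)) (Set.Ioi 0) volume ∧
    A * (∫ t in Set.Ioi (0 : ℝ), exp (t • A) * Q * exp (t • Aᴴ)) +
      (∫ t in Set.Ioi (0 : ℝ), exp (t • A) * Q * exp (t • Aᴴ)) * Aᴴ + Q = 0 ∧
    (Q.PosSemidef →
      (∫ t in Set.Ioi (0 : ℝ), exp (t • A) * Q * exp (t • Aᴴ)).PosSemidef) := by
  obtain ⟨c, hc, hdecay⟩ := hA.exists_isBigO_exp_smul_mul_mul_exp_smul Q
  let L : Matrix (Fin n) (Fin n) ℂ →L[ℝ] Matrix (Fin n) (Fin n) ℂ :=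
    LinearMap.toContinuousLinearMap (LinearMap.mulLeft ℝ A + LinearMap.mulRight ℝ Aᴴ)
  have hderiv (t : ℝ) : HasDerivAt (fun s : ℝ => exp (s • A) * Q * exp (s • Aᴴ))
      (L (exp (t • A) * Q * exp (t • Aᴴ))) t :=
    hasDerivAt_exp_smul_mul_mul_exp_smul A Q Aᴴ t
  have hint := integrableOn_Ioi_of_isBigO_exp
    (continuous_iff_continuousAt.2 fun t => (hderiv t).continuousAt) hc hdecay 0
  refine ⟨hint, ?_, fun hQ => PosSemidef.integral fun t => ?_⟩
  · have hlim := hdecay.trans_tendsto (Real.tendsto_exp_atBot.comp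
      (tendsto_id.const_mul_atTop_of_neg hc))
    have hL := L.map_integral_Ioi_of_hasDerivAt (fun t _ => hderiv t) hint hlim
    rw [zero_smul, zero_smul, exp_zero, one_mul, mul_one] at hL
    exact eq_neg_iff_add_eq_zero.1 hL
  · rw [exp_smul_conjTranspose]
    exact hQ.mul_mul_conjTranspose_same _
end

section
/- Let A be an n×n complex Hurwitz matrix and Q an n×n complex matrix. If P₁ and P₂ are n×n complex matrices both satisfying A·X + X·Aᴴ + Q = 0, then P₁ = P₂. That is, the Lyapunov equation associated with a Hurwitz matrix has at most one solution. -/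
open Matrix

/-!
The difference `X = P₁ - P₂` solves the homogeneous Sylvester equation `A X = X B` with
`B = -Aᴴ`, hence `p(A) X = X p(B)` for every polynomial `p`. Taking `p = χ_A` and using
Cayley–Hamilton gives `X χ_A(B) = 0`. By spectral mapping the eigenvalues of `χ_A(B)` are the
values `χ_A(μ)`, `μ ∈ σ(B)`, and these are nonzero because `σ(A)` lies in the open left
half-plane while `σ(B) = -conj σ(A)` lies in the right one. So `χ_A(B)` is invertible and
`X = 0`.
-/

open Polynomial

namespace Matrix

variable {R K : Type*} {m n : Type*} [Fintype m] [Fintype n] [DecidableEq m] [DecidableEq n]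

theorem pow_mul_eq_mul_pow_of_mul_eq_mul [CommSemiring R] {A : Matrix m m R}
    {B : Matrix n n R} {X : Matrix m n R} (h : A * X = X * B) (k : ℕ) :
    A ^ k * X = X * B ^ k := by
  induction k with
  | zero => simp
  | succ k ih => rw [pow_succ, pow_succ, Matrix.mul_assoc, h, ← Matrix.mul_assoc, ih,
      Matrix.mul_assoc]

theorem aeval_mul_eq_mul_aeval_of_mul_eq_mul [CommSemiring R] {A : Matrix m m R}
    {B : Matrix n n R} {X : Matrix m n R} (h : A * X = X * B) (p : R[X]) :
    aeval A p * X = X * aeval B p := by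
  induction p using Polynomial.induction_on' with
  | add p q hp hq => rw [map_add, map_add, Matrix.add_mul, Matrix.mul_add, hp, hq]
  | monomial k r =>
    rw [aeval_monomial, aeval_monomial, ← Algebra.smul_def, ← Algebra.smul_def,
      Matrix.smul_mul, pow_mul_eq_mul_pow_of_mul_eq_mul h, Matrix.mul_smul]

theorem eq_zero_of_mul_eq_mul_of_disjoint_spectrum [Field K] [IsAlgClosed K]
    {A : Matrix m m K} {B : Matrix n n K} {X : Matrix m n K}
    (hAB : Disjoint (spectrum K A) (spectrum K B)) (h : A * X = X * B) : X = 0 := by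
  cases isEmpty_or_nonempty n
  · exact Subsingleton.elim _ _
  have hX : X * aeval B A.charpoly = 0 := by
    rw [← aeval_mul_eq_mul_aeval_of_mul_eq_mul h, aeval_self_charpoly, Matrix.zero_mul]
  have hunit : IsUnit (aeval B A.charpoly) := by
    rw [← spectrum.zero_notMem_iff K, spectrum.map_polynomial_aeval_of_nonempty B _
      (spectrum.nonempty_of_isAlgClosed_of_finiteDimensional K B)]
    rintro ⟨μ, hμB, hμA⟩
    exact Set.disjoint_right.mp hAB hμB (mem_spectrum_iff_isRoot_charpoly.mpr hμA)
  calc X = X * (aeval B A.charpoly * (aeval B A.charpoly)⁻¹) := by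
        rw [mul_nonsing_inv _ ((isUnit_iff_isUnit_det _).mp hunit), Matrix.mul_one]
    _ = 0 := by rw [← Matrix.mul_assoc, hX, Matrix.zero_mul]

theorem IsHurwitz.disjoint_spectrum_neg_conjTranspose {A : Matrix n n ℂ} (hA : A.IsHurwitz) :
    Disjoint (spectrum ℂ A) (spectrum ℂ (-Aᴴ)) := by
  rw [Set.disjoint_left]
  intro μ hμ hμ'
  rw [← spectrum.neg_eq, Set.mem_neg, ← star_eq_conjTranspose, spectrum.map_star,
    Set.mem_star] at hμ'
  have hre : (star (-μ)).re = -μ.re := by simp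
  linarith [hA μ hμ, hA _ hμ']

end Matrix

/-- **Uniqueness of solutions of the Lyapunov equation for a Hurwitz matrix.**
If `A` is Hurwitz and `P₁`, `P₂` both satisfy `A X + X Aᴴ + Q = 0`, then `P₁ = P₂`. -/
theorem lyapunov_solution_unique {n : ℕ} (A Q P₁ P₂ : Matrix (Fin n) (Fin n) ℂ)
    (hA : A.IsHurwitz)
    (h₁ : A * P₁ + P₁ * Aᴴ + Q = 0)
    (h₂ : A * P₂ + P₂ * Aᴴ + Q = 0) :
    P₁ = P₂ := by
  have hhom : A * (P₁ - P₂) + (P₁ - P₂) * Aᴴ = 0 :=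
    calc A * (P₁ - P₂) + (P₁ - P₂) * Aᴴ
        = (A * P₁ + P₁ * Aᴴ + Q) - (A * P₂ + P₂ * Aᴴ + Q) := by noncomm_ring
      _ = 0 := by rw [h₁, h₂, sub_self]
  have hsylv : A * (P₁ - P₂) = (P₁ - P₂) * -Aᴴ := by
    rw [Matrix.mul_neg]
    exact eq_neg_of_add_eq_zero_left hhom
  exact sub_eq_zero.mp
    (eq_zero_of_mul_eq_mul_of_disjoint_spectrum hA.disjoint_spectrum_neg_conjTranspose hsylv)
end
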